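/- Let s₀ > 0 and let n be analytic on ℂ∖ℝ with n(conj z) = conj(n(z)) and n(z) ≠ 0 for all nonreal z, and define ñ(z) = −s₀/n(z) − z. Then n is a Nevanlinna function such that the function y ↦ (iy)²·(n(iy) + s₀/(iy)) is bounded for |y| sufficiently large (condition (2₀)) if and only if ñ is a Nevanlinna function such that y ↦ ñ(iy) is bounded for |y| sufficiently large. -/

import Mathlib

/-!
Write `q = -s₀ / n`, so that `ñ(z) = q(z) - z`, and `m(y) = (iy)²(n(iy) + s₀/(iy))`. With
`u = iy` the two quantities are tied by `s₀ ñ(u) = -a x / (a + x)` for `a = s₀ u`, `x = -m`, and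
`m = s₀ · u ñ(u) / (u + ñ(u))`; since `‖a x / (a + x)‖ ≤ 2c` once `‖x‖ ≤ c` and `‖a‖ ≥ 2c`,
boundedness of `m` and of `ñ(iy)` for large `|y|` are equivalent.

If `ñ` is Nevanlinna then `Im (ñ z + z) > 0`, hence `Im n = Im (-s₀ / (ñ z + z)) ≥ 0`. Conversely,
`Im n > 0` on the upper half-plane: otherwise, by the minimum principle for `Im n`, `Im n ≡ 0`
there and `Im m(y) = s₀ y` is unbounded. So `q` maps the upper half-plane into itself and
Schwarz–Pick gives `|q z - q w|² Im z Im w ≤ |z - w|² Im q(z) Im q(w)`. Taking `w = iy` with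
`q(iy) - iy` bounded, dividing by `y³` and letting `y → ∞` yields Julia's inequality
`Im z ≤ Im q(z)`, i.e. `Im ñ ≥ 0`.
-/

open Filter Complex

noncomputable section

/-- A Nevanlinna function: analytic on `ℂ ∖ ℝ`, symmetric with respect to conjugation,
and with non-negative imaginary part in the upper half plane. -/
def IsNevanlinna (n : ℂ → ℂ) : Prop :=
  AnalyticOn ℂ n {z : ℂ | z.im ≠ 0} ∧
  (∀ z : ℂ, z.im ≠ 0 → n ((starRingEnd ℂ) z) = (starRingEnd ℂ) (n z)) ∧
  (∀ z : ℂ, 0 < z.im → 0 ≤ (n z).im)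

open Metric Set Topology ComplexConjugate

lemma normSq_sub_conj (a b : ℂ) :
    normSq (a - conj b) = normSq (a - b) + 4 * a.im * b.im := by
  simp only [normSq_apply, sub_re, sub_im, conj_re, conj_im]
  ring

lemma sub_conj_ne_zero {z w : ℂ} (hz : 0 < z.im) (hw : 0 < w.im) : z - conj w ≠ 0 := by
  intro h
  have := congrArg im h
  simp only [sub_im, conj_im, zero_im] at this
  linarith

lemma im_neg_ofReal_div_pos {s : ℝ} (hs : 0 < s) {w : ℂ} (hw : 0 < w.im) :
    0 < (-(s : ℂ) / w).im := by
  have hw0 : w ≠ 0 := fun h => by simp [h] at hw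
  rw [div_im]
  simp only [neg_re, neg_im, ofReal_re, ofReal_im, neg_zero, zero_mul, zero_div, zero_sub,
    neg_mul, neg_div, neg_neg]
  exact div_pos (mul_pos hs hw) (normSq_pos.2 hw0)

def cayleyAt (w z : ℂ) : ℂ := (z - w) / (z - conj w)

def cayleyAtSymm (w ζ : ℂ) : ℂ := (w - conj w * ζ) / (1 - ζ)

lemma sq_norm_cayleyAt (w z : ℂ) :
    ‖cayleyAt w z‖ ^ 2 = normSq (z - w) / (normSq (z - w) + 4 * z.im * w.im) := by
  rw [cayleyAt, norm_div, div_pow, Complex.sq_norm, Complex.sq_norm, normSq_sub_conj]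

lemma norm_cayleyAt_lt_one {w z : ℂ} (hw : 0 < w.im) (hz : 0 < z.im) : ‖cayleyAt w z‖ < 1 := by
  have h : ‖cayleyAt w z‖ ^ 2 < 1 := by
    rw [sq_norm_cayleyAt, div_lt_one (by nlinarith [normSq_nonneg (z - w)])]
    linarith [mul_pos (mul_pos four_pos hz) hw]
  exact (sq_lt_one_iff₀ (norm_nonneg _)).1 h

lemma im_cayleyAtSymm_pos {w ζ : ℂ} (hw : 0 < w.im) (hζ : ‖ζ‖ < 1) :
    0 < (cayleyAtSymm w ζ).im := by
  have hζ1 : 1 - ζ ≠ 0 := fun h => by simp [← sub_eq_zero.1 h] at hζ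
  have hnum : (w - conj w * ζ).im * (1 - ζ).re - (w - conj w * ζ).re * (1 - ζ).im =
      (1 - normSq ζ) * w.im := by
    simp only [sub_re, sub_im, mul_re, mul_im, conj_re, conj_im, one_re, one_im, normSq_apply]
    ring
  have hζ2 : normSq ζ < 1 := by rw [← Complex.sq_norm]; nlinarith [norm_nonneg ζ]
  rw [cayleyAtSymm, div_im, div_sub_div_same, hnum]
  exact div_pos (mul_pos (by linarith) hw) (normSq_pos.2 hζ1)

lemma cayleyAtSymm_cayleyAt {w z : ℂ} (hw : 0 < w.im) (hz : 0 < z.im) :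
    cayleyAtSymm w (cayleyAt w z) = z := by
  have hzw := sub_conj_ne_zero hz hw
  have hww := sub_conj_ne_zero hw hw
  rw [cayleyAtSymm, cayleyAt, one_sub_div hzw, sub_sub_sub_cancel_left]
  field_simp
  ring

theorem norm_cayleyAt_map_le {q : ℂ → ℂ} (hq : DifferentiableOn ℂ q {z | 0 < z.im})
    (hqH : ∀ z, 0 < z.im → 0 < (q z).im) {z w : ℂ} (hz : 0 < z.im) (hw : 0 < w.im) :
    ‖cayleyAt (q w) (q z)‖ ≤ ‖cayleyAt w z‖ := by
  have hmaps : MapsTo (cayleyAtSymm w) (ball 0 1) {z | 0 < z.im} := fun ζ hζ =>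
    im_cayleyAtSymm_pos hw (mem_ball_zero_iff.1 hζ)
  have hsymm : DifferentiableOn ℂ (cayleyAtSymm w) (ball 0 1) := by
    refine ((differentiableOn_const _).sub ((differentiableOn_const _).mul differentiableOn_id)).div
      ((differentiableOn_const _).sub differentiableOn_id) fun ζ hζ h => ?_
    simp [← sub_eq_zero.1 h] at hζ
  have hcayley : DifferentiableOn ℂ (fun z => cayleyAt (q w) (q z)) {z | 0 < z.im} :=
    (hq.sub_const _).div (hq.sub_const _) fun z hz => sub_conj_ne_zero (hqH z hz) (hqH w hw)
  have hg := hcayley.comp hsymm hmaps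
  have := norm_le_norm_of_mapsTo_ball hg
    (fun ζ hζ => mem_closedBall_zero_iff.2 (norm_cayleyAt_lt_one (hqH w hw) (hqH _ (hmaps hζ))).le)
    (by simp [cayleyAtSymm, cayleyAt]) (norm_cayleyAt_lt_one hw hz)
  simpa only [Function.comp_apply, cayleyAtSymm_cayleyAt hw hz] using this

theorem sq_norm_sub_mul_im_mul_im_le {q : ℂ → ℂ} (hq : DifferentiableOn ℂ q {z | 0 < z.im})
    (hqH : ∀ z, 0 < z.im → 0 < (q z).im) {z w : ℂ} (hz : 0 < z.im) (hw : 0 < w.im) :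
    ‖q z - q w‖ ^ 2 * (z.im * w.im) ≤ ‖z - w‖ ^ 2 * ((q z).im * (q w).im) := by
  have h := pow_le_pow_left₀ (norm_nonneg _) (norm_cayleyAt_map_le hq hqH hz hw) 2
  have hqzw := mul_pos (hqH z hz) (hqH w hw)
  rw [sq_norm_cayleyAt, sq_norm_cayleyAt,
    div_le_div_iff₀ (by nlinarith [normSq_nonneg (q z - q w)])
      (by nlinarith [normSq_nonneg (z - w)]), ← Complex.sq_norm, ← Complex.sq_norm] at h
  nlinarith

lemma tendsto_norm_sub_I_mul_div_atTop {b : ℝ → ℂ}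
    (hb : IsBoundedUnder (· ≤ ·) atTop (fun y => ‖b y‖)) :
    Tendsto (fun y : ℝ => ‖b y - I * y‖ / y) atTop (𝓝 1) := by
  have hinv : Tendsto (fun y : ℝ => ((y⁻¹ : ℝ) : ℂ)) atTop (𝓝 0) := by
    rw [← ofReal_zero]
    exact (continuous_ofReal.tendsto 0).comp tendsto_inv_atTop_zero
  have h : Tendsto (fun y : ℝ => ‖((y⁻¹ : ℝ) : ℂ) * b y - I‖) atTop (𝓝 1) := by
    simpa using ((hinv.zero_mul_isBoundedUnder_le hb).sub_const I).norm
  refine h.congr' ?_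
  filter_upwards [eventually_gt_atTop 0] with y hy
  have hy0 : (y : ℂ) ≠ 0 := ofReal_ne_zero.2 hy.ne'
  rw [show ((y⁻¹ : ℝ) : ℂ) * b y - I = ((y⁻¹ : ℝ) : ℂ) * (b y - I * y) by push_cast; field_simp,
    norm_mul, norm_real, Real.norm_of_nonneg (inv_nonneg.2 hy.le), inv_mul_eq_div]

theorem im_le_im_of_isBoundedUnder_sub_I_mul {q : ℂ → ℂ} (hq : DifferentiableOn ℂ q {z | 0 < z.im})
    (hqH : ∀ z, 0 < z.im → 0 < (q z).im)
    (hbd : IsBoundedUnder (· ≤ ·) atTop (fun y : ℝ => ‖q (I * y) - I * y‖)) {z : ℂ}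
    (hz : 0 < z.im) : z.im ≤ (q z).im := by
  have hqz : Tendsto (fun y : ℝ => ‖q z - q (I * y)‖ / y) atTop (𝓝 1) := by
    have hb : IsBoundedUnder (· ≤ ·) atTop (fun y : ℝ => ‖q z - (q (I * y) - I * y)‖) := by
      obtain ⟨c, hc⟩ := hbd
      refine ⟨‖q z‖ + c, eventually_map.2 ?_⟩
      filter_upwards [eventually_map.1 hc] with y hy
      exact (norm_sub_le _ _).trans (add_le_add_right hy _)
    simpa only [sub_sub, sub_add_cancel] using tendsto_norm_sub_I_mul_div_atTop hb
  have hzI : Tendsto (fun y : ℝ => ‖z - I * y‖ / y) atTop (𝓝 1) :=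
    tendsto_norm_sub_I_mul_div_atTop isBoundedUnder_const
  have hqI : Tendsto (fun y : ℝ => ‖q (I * y)‖ / y) atTop (𝓝 1) := by
    have hb : IsBoundedUnder (· ≤ ·) atTop (fun y : ℝ => ‖-(q (I * y) - I * y)‖) := by
      simpa only [norm_neg] using hbd
    simpa [← sub_eq_add_neg, norm_sub_rev] using tendsto_norm_sub_I_mul_div_atTop hb
  -- Schwarz–Pick at `w = I * y`, divided by `y ^ 3`
  have hpick : ∀ᶠ y : ℝ in atTop, z.im * (‖q z - q (I * y)‖ / y) ^ 2 ≤
      (q z).im * ((‖z - I * y‖ / y) ^ 2 * (‖q (I * y)‖ / y)) := by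
    filter_upwards [eventually_gt_atTop 0] with y hy
    have hw : 0 < (I * (y : ℂ)).im := by simpa using hy
    have h := sq_norm_sub_mul_im_mul_im_le hq hqH hz hw
    rw [show (I * (y : ℂ)).im = y by simp] at h
    have him : (q (I * y)).im ≤ ‖q (I * y)‖ := (le_abs_self _).trans (abs_im_le_norm _)
    have hqz0 := (hqH z hz).le
    calc z.im * (‖q z - q (I * y)‖ / y) ^ 2 = ‖q z - q (I * y)‖ ^ 2 * (z.im * y) / y ^ 3 := by
          field_simp
      _ ≤ ‖z - I * y‖ ^ 2 * ((q z).im * ‖q (I * y)‖) / y ^ 3 :=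
          div_le_div_of_nonneg_right (h.trans (by gcongr)) (by positivity)
      _ = (q z).im * ((‖z - I * y‖ / y) ^ 2 * (‖q (I * y)‖ / y)) := by field_simp
  simpa using le_of_tendsto_of_tendsto ((hqz.pow 2).const_mul z.im)
    (((hzI.pow 2).mul hqI).const_mul (q z).im) hpick

theorem eqOn_im_of_isMinOn_im {f : ℂ → ℂ} {U : Set ℂ} {c : ℂ} (hU : IsPreconnected U)
    (hUo : IsOpen U) (hf : DifferentiableOn ℂ f U) (hc : c ∈ U)
    (hmin : IsMinOn (fun z => (f z).im) U c) : EqOn (fun z => (f z).im) (fun _ => (f c).im) U := by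
  have hmax : IsMaxOn (norm ∘ fun z => exp (I * f z)) U c := fun z hz => by
    simpa [norm_exp] using hmin hz
  intro z hz
  have hexp : DifferentiableOn ℂ (fun z => exp (I * f z)) U :=
    ((differentiableOn_const I).mul hf).cexp
  simpa [norm_exp] using norm_eqOn_of_isPreconnected_of_isMaxOn hU hUo hexp hc hmax hz

lemma im_I_mul_sq_mul_add_div (w : ℂ) (s : ℝ) {y : ℝ} (hy : y ≠ 0) :
    ((I * y) ^ 2 * (w + s / (I * y))).im = s * y - y ^ 2 * w.im := by
  have hy' : (y : ℂ) ≠ 0 := ofReal_ne_zero.2 hy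
  rw [show (I * y) ^ 2 * (w + s / (I * y)) = -(y ^ 2 : ℝ) * w + I * (s * y : ℝ) by
    field_simp
    push_cast
    linear_combination (y ^ 2 * w) * I_sq]
  simp only [add_im, mul_im, neg_re, neg_im, I_re, I_im, ofReal_re, ofReal_im]
  ring

theorem im_pos_of_isBoundedUnder_sq_mul_add_div {s : ℝ} (hs : 0 < s) {n : ℂ → ℂ}
    (hn : DifferentiableOn ℂ n {z | 0 < z.im}) (hpos : ∀ z, 0 < z.im → 0 ≤ (n z).im)
    (hbd : IsBoundedUnder (· ≤ ·) atTop (fun y : ℝ => ‖(I * y) ^ 2 * (n (I * y) + s / (I * y))‖))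
    {z : ℂ} (hz : 0 < z.im) : 0 < (n z).im := by
  refine lt_of_le_of_ne (hpos z hz) fun h0 => ?_
  have him0 := eqOn_im_of_isMinOn_im (convex_halfSpace_im_gt 0).isPreconnected
    (isOpen_lt continuous_const continuous_im) hn (c := z) hz fun w hw => by
      simpa [← h0] using hpos w hw
  obtain ⟨c, hc⟩ := hbd
  obtain ⟨y, hyc, hy0, hys⟩ := ((eventually_map.1 hc).and
    ((eventually_gt_atTop 0).and (eventually_gt_atTop (c / s)))).exists
  have him : ((I * y) ^ 2 * (n (I * y) + s / (I * y))).im = s * y := by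
    have hIy : (n (I * y)).im = 0 := (him0 (show 0 < (I * (y : ℂ)).im by simpa)).trans h0.symm
    rw [im_I_mul_sq_mul_add_div _ _ hy0.ne', hIy]
    ring
  have hle := ((le_abs_self _).trans (abs_im_le_norm _)).trans hyc
  rw [him] at hle
  rw [div_lt_iff₀ hs] at hys
  linarith

lemma norm_mul_div_add_le {𝕜 : Type*} [NormedField 𝕜] {a x : 𝕜} {c : ℝ} (hx : ‖x‖ ≤ c)
    (ha : 2 * c ≤ ‖a‖) : ‖a * x / (a + x)‖ ≤ 2 * c := by
  rcases eq_or_ne (a + x) 0 with h | h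
  · simp only [h, div_zero, norm_zero]
    linarith [norm_nonneg x]
  have hax : ‖a‖ / 2 ≤ ‖a + x‖ := by
    have := norm_sub_norm_le a (-x)
    rw [norm_neg, sub_neg_eq_add] at this
    linarith
  rw [norm_div, norm_mul, div_le_iff₀ (norm_pos_iff.2 h)]
  nlinarith [mul_le_mul_of_nonneg_left hx (norm_nonneg a), norm_nonneg x]

lemma norm_neg_div_sub_le {s : ℝ} (hs : 0 < s) {u w : ℂ} (hu : u ≠ 0) (hw : w ≠ 0) {c : ℝ}
    (hm : ‖u ^ 2 * (w + s / u)‖ ≤ c) (hc : 2 * c ≤ s * ‖u‖) : ‖-s / w - u‖ ≤ 2 * c / s := by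
  have key : (s : ℂ) * (-s / w - u) =
      -(s * u * -(u ^ 2 * (w + s / u)) / (s * u + -(u ^ 2 * (w + s / u)))) := by
    field_simp
    ring
  have hsu : ‖(s : ℂ) * u‖ = s * ‖u‖ := by rw [norm_mul, norm_real, Real.norm_of_nonneg hs.le]
  have h : ‖(s : ℂ) * (-s / w - u)‖ ≤ 2 * c := by
    rw [key, norm_neg]
    exact norm_mul_div_add_le (by rwa [norm_neg]) (by rwa [hsu])
  rw [norm_mul, norm_real, Real.norm_of_nonneg hs.le] at h
  rw [le_div_iff₀ hs]
  linarith

lemma norm_sq_mul_add_div_le {s : ℝ} (hs : 0 < s) {u w : ℂ} (hu : u ≠ 0) (hw : w ≠ 0) {c : ℝ}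
    (ht : ‖-s / w - u‖ ≤ c) (hc : 2 * c ≤ ‖u‖) : ‖u ^ 2 * (w + s / u)‖ ≤ s * (2 * c) := by
  have hs0 : (s : ℂ) ≠ 0 := ofReal_ne_zero.2 hs.ne'
  have key : u ^ 2 * (w + s / u) = s * (u * (-s / w - u) / (u + (-s / w - u))) := by
    rw [add_sub_cancel]
    field_simp
    ring
  rw [key, norm_mul, norm_real, Real.norm_of_nonneg hs.le]
  exact mul_le_mul_of_nonneg_left (norm_mul_div_add_le ht hc) hs.le

lemma eventually_ne_zero_and_le_norm_I_mul {n : ℂ → ℂ} (hne : ∀ z : ℂ, z.im ≠ 0 → n z ≠ 0)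
    (K : ℝ) : ∀ᶠ y : ℝ in atTop ⊔ atBot, I * (y : ℂ) ≠ 0 ∧ n (I * y) ≠ 0 ∧ K ≤ ‖I * (y : ℂ)‖ := by
  have habs : Tendsto (fun y : ℝ => ‖I * (y : ℂ)‖) (atTop ⊔ atBot) atTop := by
    simpa using tendsto_abs_atTop_atTop.sup tendsto_abs_atBot_atTop
  filter_upwards [habs.eventually_gt_atTop 0, habs.eventually_ge_atTop K] with y hy hK
  have hy0 : y ≠ 0 := by rintro rfl; simp at hy
  exact ⟨norm_pos_iff.1 hy, hne _ (by simpa using hy0), hK⟩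

theorem isBoundedUnder_norm_neg_div_sub {s : ℝ} (hs : 0 < s) {n : ℂ → ℂ}
    (hne : ∀ z : ℂ, z.im ≠ 0 → n z ≠ 0)
    (hbd : IsBoundedUnder (· ≤ ·) (atTop ⊔ atBot)
      (fun y : ℝ => ‖(I * y) ^ 2 * (n (I * y) + s / (I * y))‖)) :
    IsBoundedUnder (· ≤ ·) (atTop ⊔ atBot) (fun y : ℝ => ‖-s / n (I * y) - I * y‖) := by
  obtain ⟨c, hc⟩ := hbd
  refine ⟨2 * c / s, eventually_map.2 ?_⟩
  filter_upwards [eventually_map.1 hc, eventually_ne_zero_and_le_norm_I_mul hne (2 * c / s)]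
    with y hm ⟨hu, hw, hK⟩
  exact norm_neg_div_sub_le hs hu hw hm (by rwa [← div_le_iff₀' hs])

theorem isBoundedUnder_norm_sq_mul_add_div {s : ℝ} (hs : 0 < s) {n : ℂ → ℂ}
    (hne : ∀ z : ℂ, z.im ≠ 0 → n z ≠ 0)
    (hbd : IsBoundedUnder (· ≤ ·) (atTop ⊔ atBot) (fun y : ℝ => ‖-s / n (I * y) - I * y‖)) :
    IsBoundedUnder (· ≤ ·) (atTop ⊔ atBot)
      (fun y : ℝ => ‖(I * y) ^ 2 * (n (I * y) + s / (I * y))‖) := by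
  obtain ⟨c, hc⟩ := hbd
  refine ⟨s * (2 * c), eventually_map.2 ?_⟩
  filter_upwards [eventually_map.1 hc, eventually_ne_zero_and_le_norm_I_mul hne (2 * c)]
    with y ht ⟨hu, hw, hK⟩
  exact norm_sq_mul_add_div_le hs hu hw ht hK

/-- for `ñ(z) = -s₀/n(z) - z`, the function `n` is a Nevanlinna function
satisfying condition (2₀) (i.e. `(iy)²·(n(iy) + s₀/(iy))` is bounded for `|y|` large) if and
only if `ñ` is a Nevanlinna function with `ñ(iy)` bounded for `|y|` large. -/
theorem schur_type_transform_cond_two_zero (s₀ : ℝ) (hs₀ : 0 < s₀) (n : ℂ → ℂ)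
    (hanal : AnalyticOn ℂ n {z : ℂ | z.im ≠ 0})
    (hsym : ∀ z : ℂ, z.im ≠ 0 → n ((starRingEnd ℂ) z) = (starRingEnd ℂ) (n z))
    (hne : ∀ z : ℂ, z.im ≠ 0 → n z ≠ 0)
    (nt : ℂ → ℂ) (hnt : ∀ z : ℂ, nt z = -(s₀ : ℂ) / n z - z) :
    (IsNevanlinna n ∧
        IsBoundedUnder (· ≤ ·) (atTop ⊔ atBot)
          (fun y : ℝ =>
            ‖(Complex.I * y) ^ 2 * (n (Complex.I * y) + (s₀ : ℂ) / (Complex.I * y))‖)) ↔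
      (IsNevanlinna nt ∧
        IsBoundedUnder (· ≤ ·) (atTop ⊔ atBot)
          (fun y : ℝ => ‖nt (Complex.I * y)‖)) := by
  obtain rfl : nt = fun z => -(s₀ : ℂ) / n z - z := funext hnt
  have hdiff : DifferentiableOn ℂ n {z | 0 < z.im} :=
    hanal.differentiableOn.mono fun z hz => ne_of_gt hz
  constructor
  · rintro ⟨⟨-, -, hpos⟩, hbd⟩
    have hq : DifferentiableOn ℂ (fun z => -(s₀ : ℂ) / n z) {z | 0 < z.im} :=
      (differentiableOn_const _).div hdiff fun z hz => hne z (ne_of_gt hz)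
    have hqH : ∀ z : ℂ, 0 < z.im → 0 < (-(s₀ : ℂ) / n z).im := fun z hz =>
      im_neg_ofReal_div_pos hs₀
        (im_pos_of_isBoundedUnder_sq_mul_add_div hs₀ hdiff hpos (hbd.mono le_sup_left) hz)
    have hntbd := isBoundedUnder_norm_neg_div_sub hs₀ hne hbd
    refine ⟨⟨(analyticOn_const.div hanal hne).sub analyticOn_id, fun z hz => ?_, fun z hz => ?_⟩,
      hntbd⟩
    · simp [hsym z hz, map_div₀]
    · have := im_le_im_of_isBoundedUnder_sub_I_mul hq hqH (hntbd.mono le_sup_left) hz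
      rw [sub_im]
      linarith
  · rintro ⟨⟨-, -, hpos⟩, hbd⟩
    refine ⟨⟨hanal, hsym, fun z hz => ?_⟩, isBoundedUnder_norm_sq_mul_add_div hs₀ hne hbd⟩
    have hnz : n z = -(s₀ : ℂ) / (-(s₀ : ℂ) / n z - z + z) := by
      rw [sub_add_cancel, div_div_cancel₀ (neg_ne_zero.2 (ofReal_ne_zero.2 hs₀.ne'))]
    rw [hnz]
    exact (im_neg_ofReal_div_pos hs₀ (by simpa using add_pos_of_nonneg_of_pos (hpos z hz) hz)).le
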